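/- arXiv:1805.02994 — 2 statements merged into one kernel-verified Lean document; each statement's English description precedes it below -/
import Mathlib

section
/- Interval Model alignment lemma: any interval $[a, a+d)$ of length $d = 2^j$ (with integers $a \ge 0$) is contained in the union of at most two aligned intervals of length $d$, i.e., intervals of the form $[k d, (k+1)d)$ with $k$ an integer. Consequently, any leasing solution with arbitrary start times can be converted to one with aligned start times at a cost increase of at most a factor of $2$ (each lease is replaced by at most two aligned leases of the same type). -/
/-!
An interval `[a, a + d)` starts in the aligned block `[⌊a/d⌋d, (⌊a/d⌋+1)d)` and, having length
`d`, ends before the next block is over. Replacing every lease by these two aligned leases of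
the same type therefore keeps every covered (node, time) pair covered and exactly doubles the
cost.
-/

theorem Nat.Ico_subset_Ico_div_mul_union (a d : ℕ) :
    Set.Ico a (a + d) ⊆
      Set.Ico (a / d * d) ((a / d + 1) * d) ∪ Set.Ico ((a / d + 1) * d) ((a / d + 2) * d) := by
  rintro t ⟨hat, hta⟩
  have hstart : a / d * d ≤ a := Nat.div_mul_le_self a d
  have hend : a < (a / d + 1) * d := by
    rcases d.eq_zero_or_pos with rfl | hd
    · omega
    · rw [add_one_mul]; exact Nat.lt_div_mul_add hd
  rcases lt_or_ge t ((a / d + 1) * d) with h | h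
  · exact Or.inl ⟨hstart.trans hat, h⟩
  · refine Or.inr ⟨h, ?_⟩
    calc t < a + d := hta
      _ ≤ (a / d + 1) * d + d := by omega
      _ = (a / d + 2) * d := by ring

namespace Lease

variable {N L : Type*} (d : L → ℕ)

def alignedCover (x : N × L × ℕ) : List (N × L × ℕ) :=
  [(x.1, x.2.1, x.2.2 / d x.2.1 * d x.2.1), (x.1, x.2.1, (x.2.2 / d x.2.1 + 1) * d x.2.1)]

variable {d}

theorem dvd_of_mem_alignedCover {x y : N × L × ℕ} (hy : y ∈ alignedCover d x) :
    d y.2.1 ∣ y.2.2 := by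
  simp only [alignedCover, List.mem_cons, List.not_mem_nil, or_false] at hy
  rcases hy with rfl | rfl <;> exact Dvd.intro_left _ rfl

theorem exists_mem_alignedCover_active {x : N × L × ℕ} {t : ℕ}
    (hstart : x.2.2 ≤ t) (hend : t < x.2.2 + d x.2.1) :
    ∃ y ∈ alignedCover d x, y.1 = x.1 ∧ y.2.2 ≤ t ∧ t < y.2.2 + d y.2.1 := by
  rcases Nat.Ico_subset_Ico_div_mul_union x.2.2 (d x.2.1) ⟨hstart, hend⟩ with
    ⟨hlo, hhi⟩ | ⟨hlo, hhi⟩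
  · exact ⟨_, List.mem_cons_self, rfl, hlo, by rwa [← add_one_mul]⟩
  · refine ⟨_, List.mem_cons_of_mem _ List.mem_cons_self, rfl, hlo, ?_⟩
    calc t < (x.2.2 / d x.2.1 + 2) * d x.2.1 := hhi
      _ = (x.2.2 / d x.2.1 + 1) * d x.2.1 + d x.2.1 := by ring

theorem sum_map_flatMap_alignedCover {R : Type*} [NonAssocSemiring R] (c : L → R)
    (S : List (N × L × ℕ)) :
    ((S.flatMap (alignedCover d)).map (fun x => c x.2.1)).sum =
      2 * (S.map (fun x => c x.2.1)).sum := by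
  induction S with
  | nil => simp
  | cons x S ih =>
    simp only [List.flatMap_cons, List.map_append, List.sum_append, ih, List.map_cons,
      List.sum_cons, alignedCover, List.map_nil, List.sum_nil, add_zero]
    rw [mul_add, two_mul, two_mul]

end Lease

/-- Interval Model alignment lemma. (1) Any interval `[a, a + 2^j)` is contained in the
union of at most two aligned intervals of the same length. (2) Consequently, any leasing
solution (a list of (node, lease type, start time) triplets, lease durations powers of
two) can be converted to an aligned one (all start times multiples of the duration) that
is active whenever the original is, at a cost increase of at most a factor `2`. -/
theorem stmt_12 :
    (∀ a j : ℕ,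
      Set.Ico a (a + 2 ^ j) ⊆
        Set.Ico (a / 2 ^ j * 2 ^ j) ((a / 2 ^ j + 1) * 2 ^ j) ∪
          Set.Ico ((a / 2 ^ j + 1) * 2 ^ j) ((a / 2 ^ j + 2) * 2 ^ j)) ∧
    (∀ (N LT : Type) (d : LT → ℕ) (c : LT → ℝ),
      (∀ l, ∃ k : ℕ, d l = 2 ^ k) → (∀ l, 0 ≤ c l) →
      ∀ S : List (N × LT × ℕ),
        ∃ S' : List (N × LT × ℕ),
          (∀ x ∈ S', d x.2.1 ∣ x.2.2) ∧
          (∀ (v : N) (t : ℕ),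
            (∃ x ∈ S, x.1 = v ∧ x.2.2 ≤ t ∧ t < x.2.2 + d x.2.1) →
            (∃ x ∈ S', x.1 = v ∧ x.2.2 ≤ t ∧ t < x.2.2 + d x.2.1)) ∧
          (S'.map (fun x => c x.2.1)).sum ≤ 2 * (S.map (fun x => c x.2.1)).sum) := by
  refine ⟨fun a j => Nat.Ico_subset_Ico_div_mul_union a (2 ^ j), fun N LT d c _ _ S => ?_⟩
  refine ⟨S.flatMap (Lease.alignedCover d), ?_, ?_, (Lease.sum_map_flatMap_alignedCover c S).le⟩
  · intro y hy
    obtain ⟨x, -, hyx⟩ := List.mem_flatMap.1 hy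
    exact Lease.dvd_of_mem_alignedCover hyx
  · rintro v t ⟨x, hxS, rfl, hstart, hend⟩
    obtain ⟨y, hyx, hy⟩ := Lease.exists_mem_alignedCover_active hstart hend
    exact ⟨y, List.mem_flatMap.2 ⟨x, hxS, hyx⟩, hy⟩
end

section
/- Fractional covering bound: suppose demands arrive online, and whenever an uncovered demand $u$ (with $\sum_{v \in W_u} w_v < 1$) arrives, weights are repeatedly updated by $w_v \leftarrow w_v(1+1/c_v) + \frac{1}{|W_u| \cdot L \cdot c_v}$ for all $v \in W_u$ until $\sum_{v \in W_u} w_v \ge 1$. If there exists a feasible integral solution $O \subseteq \mathcal{V}$ (with $O \cap W_u \ne \emptyset$ for every demand $u$) of cost $\mathrm{OPT} = \sum_{v \in O} c_v$, then at termination $\sum_{v \in \mathcal{V}} c_v w_v \le 2 \cdot \mathrm{OPT} \cdot \log_2(|W_{\max}| \cdot L \cdot c_{\max}) + O(\mathrm{OPT})$, i.e., the final fractional cost is $O(\log(m L c_{\max})) \cdot \mathrm{OPT}$ where $m = \max_u |W_u|$ and $c_{\max} = \max_v c_v$. -/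
open scoped Classical

set_option maxHeartbeats 2000000 in
/-- Fractional covering bound for the online multiplicative-weight update process:
weights start at `0`; whenever a demand with cover set `A n` is uncovered
(`∑_{v ∈ A n} w v < 1`) every `v ∈ A n` is updated to
`w v (1 + 1/c v) + 1/(|A n| · L · c v)`.  If an integral solution `O` hits every cover
set, then the final fractional cost is at most
`2 · OPT · log₂(m · L · c_max) + C · OPT` for a universal constant `C`. -/
theorem stmt_15 :
    ∃ C : ℝ, 0 < C ∧
      ∀ (V : Type) [Fintype V] (c : V → ℝ) (cmax L : ℝ) (m : ℕ)
        (w : ℕ → V → ℝ) (A : ℕ → Finset V) (N : ℕ) (O : Finset V),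
        (∀ v, 1 ≤ c v) → (∀ v, c v ≤ cmax) → 1 ≤ L →
        (∀ v, w 0 v = 0) →
        (∀ n < N, (A n).Nonempty) →
        (∀ n < N, (A n).card ≤ m) →
        (∀ n < N, ∑ v ∈ A n, w n v < 1) →
        (∀ n < N, ∀ v : V,
          w (n + 1) v =
            if v ∈ A n then w n v * (1 + 1 / c v) + 1 / ((A n).card * L * c v)
            else w n v) →
        (∀ n < N, (O ∩ A n).Nonempty) →
        ∑ v, c v * w N v ≤
          2 * (∑ v ∈ O, c v) * Real.logb 2 (m * L * cmax) + C * (∑ v ∈ O, c v) := by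
  refine ⟨4, by norm_num, ?_⟩
  intro V _ c cmax L m w A N O hc hcmax hL hw0 hAne hAcard hunc hupd hO
  have hLpos : (0:ℝ) < L := lt_of_lt_of_le zero_lt_one hL
  have hcpos : ∀ v, (0:ℝ) < c v := fun v => lt_of_lt_of_le zero_lt_one (hc v)
  have hOPTnn : 0 ≤ ∑ v ∈ O, c v := Finset.sum_nonneg fun v _ => (hcpos v).le
  -- weights are nonnegative
  have hnn : ∀ n, n ≤ N → ∀ v, 0 ≤ w n v := by
    intro n
    induction n with
    | zero => intro _ v; rw [hw0]
    | succ n ih =>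
      intro hn v
      have hn' : n < N := hn
      rw [hupd n hn' v]
      have hw := ih (Nat.le_of_lt hn') v
      split_ifs with hv
      · have hcv := hcpos v
        have h1 : (0:ℝ) ≤ 1 / c v := le_of_lt (one_div_pos.mpr hcv)
        have h2 : (0:ℝ) ≤ 1 / (((A n).card : ℝ) * L * c v) :=
          div_nonneg zero_le_one
            (mul_nonneg (mul_nonneg (Nat.cast_nonneg _) hLpos.le) hcv.le)
        nlinarith
      · exact hw
  -- weights are monotone (one step)
  have hmono : ∀ n, n < N → ∀ v, w n v ≤ w (n+1) v := by
    intro n hn v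
    rw [hupd n hn v]
    split_ifs with hv
    · have hcv := hcpos v
      have hw := hnn n hn.le v
      have h1 : (0:ℝ) ≤ 1 / c v := le_of_lt (one_div_pos.mpr hcv)
      have h2 : (0:ℝ) ≤ 1 / (((A n).card : ℝ) * L * c v) :=
        div_nonneg zero_le_one
          (mul_nonneg (mul_nonneg (Nat.cast_nonneg _) hLpos.le) hcv.le)
      nlinarith
    · exact le_refl _
  -- cost grows by at most 2 per step
  have hcost : ∀ n, n ≤ N → ∑ v, c v * w n v ≤ 2 * n := by
    intro n
    induction n with
    | zero => intro _; simp [hw0]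
    | succ n ih =>
      intro hn
      have hn' : n < N := hn
      have hcard : (0:ℝ) < ((A n).card : ℝ) := by
        exact_mod_cast Finset.card_pos.mpr (hAne n hn')
      have key : ∀ v, c v * w (n+1) v
          = c v * w n v + (if v ∈ A n then w n v + 1 / (((A n).card:ℝ) * L) else 0) := by
        intro v
        rw [hupd n hn' v]
        split_ifs with hv
        · have hcv : c v ≠ 0 := (hcpos v).ne'
          field_simp [hcv, hcard.ne', hLpos.ne']
          ring
        · ring
      have hsum : ∑ v, c v * w (n+1) v
          = (∑ v, c v * w n v) + ∑ v ∈ A n, (w n v + 1/(((A n).card:ℝ)*L)) := by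
        calc ∑ v, c v * w (n+1) v
            = ∑ v, (c v * w n v + (if v ∈ A n then w n v + 1/(((A n).card:ℝ)*L) else 0)) :=
              Finset.sum_congr rfl fun v _ => key v
          _ = (∑ v, c v * w n v) + ∑ v ∈ A n, (w n v + 1/(((A n).card:ℝ)*L)) := by
              rw [Finset.sum_add_distrib, Finset.sum_ite_mem, Finset.univ_inter]
      have h1 : ∑ v ∈ A n, (w n v + 1/(((A n).card:ℝ)*L))
          = (∑ v ∈ A n, w n v) + ((A n).card:ℝ) * (1/(((A n).card:ℝ)*L)) := by
        rw [Finset.sum_add_distrib, Finset.sum_const, nsmul_eq_mul]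
      have h2 : ((A n).card:ℝ) * (1/(((A n).card:ℝ)*L)) = 1/L := by
        field_simp [hcard.ne', hLpos.ne']
      have h3 := hunc n hn'
      have h4 : 1/L ≤ 1 := by rw [div_le_one hLpos]; exact hL
      have h5 := ih hn'.le
      rw [hsum, h1, h2]
      push_cast
      linarith
  -- trivial case: V empty
  rcases isEmpty_or_nonempty V with hV | hV
  · have hO0 : O = ∅ := Finset.eq_empty_of_isEmpty O
    simp [hO0]
  have hcmax1 : (1:ℝ) ≤ cmax := le_trans (hc (Classical.arbitrary V)) (hcmax _)
  -- trivial case: m = 0 (forces N = 0)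
  rcases Nat.eq_zero_or_pos m with hm | hm
  · have hN : N = 0 := by
      by_contra h
      have h0 : 0 < N := Nat.pos_of_ne_zero h
      have := hAcard 0 h0
      have := Finset.card_pos.mpr (hAne 0 h0)
      omega
    subst hN; subst hm
    have hlhs : ∑ v, c v * w 0 v = 0 := by simp [hw0]
    rw [hlhs]
    have hlog : Real.logb 2 ((0:ℕ) * L * cmax) = 0 := by
      norm_num
    rw [hlog]
    nlinarith
  -- main case
  have hm1 : (1:ℝ) ≤ (m:ℝ) := by exact_mod_cast hm
  have hmL1 : (1:ℝ) ≤ (m:ℝ) * L := by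
    have := mul_le_mul hm1 hL zero_le_one (by linarith : (0:ℝ) ≤ (m:ℝ))
    linarith
  have hX1 : (1:ℝ) ≤ (m:ℝ) * L * cmax := by
    have := mul_le_mul hmL1 hcmax1 zero_le_one (by linarith : (0:ℝ) ≤ (m:ℝ) * L)
    linarith
  have hlg : 0 ≤ Real.logb 2 ((m:ℝ) * L * cmax) :=
    Real.logb_nonneg one_lt_two hX1
  set lg := Real.logb 2 ((m:ℝ) * L * cmax) with hlgdef
  -- choose a witness in O ∩ A n for each step
  have hgex : ∀ n, ∃ o : V, n < N → o ∈ O ∧ o ∈ A n := by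
    intro n
    by_cases hn : n < N
    · obtain ⟨o, ho⟩ := hO n hn
      exact ⟨o, fun _ => Finset.mem_inter.mp ho⟩
    · exact ⟨Classical.arbitrary V, fun h => absurd h hn⟩
  choose g hgspec using hgex
  -- fiber bound: each o ∈ O is charged at most c o * lg + 2 c o steps
  have hfiber : ∀ o ∈ O,
      ((((Finset.range N).filter (fun n => g n = o)).card : ℝ)) ≤ c o * lg + 2 * c o := by
    intro o hoO
    set T := (Finset.range N).filter (fun n => g n = o) with hT
    have hTmem : ∀ n ∈ T, n < N ∧ o ∈ A n := by
      intro n hn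
      rw [hT, Finset.mem_filter, Finset.mem_range] at hn
      exact ⟨hn.1, hn.2 ▸ (hgspec n hn.1).2⟩
    have hco := hcpos o
    have hxpos : (0:ℝ) < 1 / c o := one_div_pos.mpr hco
    have hbase : (0:ℝ) ≤ 1 + 1 / c o := by linarith
    -- growth invariant
    have hinv : ∀ n, n ≤ N →
        (1 + 1/c o)^((T.filter (· < n)).card) ≤ 1 + (m:ℝ) * L * w n o := by
      intro n
      induction n with
      | zero =>
        intro _
        have he : T.filter (· < 0) = ∅ := by
          apply Finset.filter_false_of_mem; intro a _; omega
        rw [he, hw0]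
        simp
      | succ n ih =>
        intro hn
        have hn' : n < N := hn
        have ihn := ih hn'.le
        have hmLnn : (0:ℝ) ≤ (m:ℝ) * L := mul_nonneg (Nat.cast_nonneg _) hLpos.le
        by_cases hnT : n ∈ T
        · obtain ⟨-, hoA⟩ := hTmem n hnT
          have hfil : T.filter (· < n+1) = insert n (T.filter (· < n)) := by
            ext a
            simp only [Finset.mem_filter, Finset.mem_insert]
            constructor
            · rintro ⟨ha, hlt⟩
              rcases Nat.lt_succ_iff_lt_or_eq.mp hlt with h | h
              · exact Or.inr ⟨ha, h⟩
              · exact Or.inl h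
            · rintro (rfl | ⟨ha, hlt⟩)
              · exact ⟨hnT, Nat.lt_succ_self a⟩
              · exact ⟨ha, Nat.lt_succ_of_lt hlt⟩
          have hnotin : n ∉ T.filter (· < n) := by
            simp
          rw [hfil, Finset.card_insert_of_notMem hnotin, pow_succ]
          have hupdo := hupd n hn' o
          rw [if_pos hoA] at hupdo
          rw [hupdo]
          have hcardp : (0:ℝ) < ((A n).card:ℝ) := by
            exact_mod_cast Finset.card_pos.mpr (hAne n hn')
          have hcardm : ((A n).card:ℝ) ≤ (m:ℝ) := by exact_mod_cast hAcard n hn'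
          have hd : 1/((m:ℝ) * L * c o) ≤ 1/(((A n).card:ℝ) * L * c o) := by
            apply one_div_le_one_div_of_le
            · exact mul_pos (mul_pos hcardp hLpos) hco
            · exact mul_le_mul_of_nonneg_right
                (mul_le_mul_of_nonneg_right hcardm hLpos.le) hco.le
          have heq : (m:ℝ) * L * (1/((m:ℝ) * L * c o)) = 1 / c o := by
            have hm0 : (m:ℝ) ≠ 0 := by positivity
            field_simp [hm0, hLpos.ne', hco.ne']
          have hA1 : (1 + 1/c o)^((T.filter (· < n)).card) * (1 + 1/c o)
              ≤ (1 + (m:ℝ) * L * w n o) * (1 + 1/c o) :=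
            mul_le_mul_of_nonneg_right ihn hbase
          have hB1 : (m:ℝ) * L * (1/((m:ℝ) * L * c o))
              ≤ (m:ℝ) * L * (1/(((A n).card:ℝ) * L * c o)) :=
            mul_le_mul_of_nonneg_left hd hmLnn
          nlinarith [hnn n hn'.le o]
        · have hfil : T.filter (· < n+1) = T.filter (· < n) := by
            ext a
            simp only [Finset.mem_filter]
            constructor
            · rintro ⟨ha, hlt⟩
              refine ⟨ha, ?_⟩
              rcases Nat.lt_succ_iff_lt_or_eq.mp hlt with h | h
              · exact h
              · exact absurd (h ▸ ha) hnT
            · rintro ⟨ha, hlt⟩; exact ⟨ha, Nat.lt_succ_of_lt hlt⟩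
          rw [hfil]
          have hmn := hmono n hn' o
          nlinarith [ihn]
    -- conclude the bound on T.card
    by_cases hTe : T = ∅
    · rw [hTe]
      simp only [Finset.card_empty, Nat.cast_zero]
      nlinarith [hc o]
    · have hTne : T.Nonempty := Finset.nonempty_of_ne_empty hTe
      set n' := T.max' hTne with hn'def
      have hn'T : n' ∈ T := T.max'_mem hTne
      obtain ⟨hn'N, hoA'⟩ := hTmem n' hn'T
      have hferase : T.filter (· < n') = T.erase n' := by
        ext a
        simp only [Finset.mem_filter, Finset.mem_erase]
        constructor
        · rintro ⟨ha, hlt⟩; exact ⟨Nat.ne_of_lt hlt, ha⟩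
        · rintro ⟨hne, ha⟩
          exact ⟨ha, lt_of_le_of_ne (T.le_max' a ha) hne⟩
      have hcarde : (T.filter (· < n')).card = T.card - 1 := by
        rw [hferase, Finset.card_erase_of_mem hn'T]
      have hwlt : w n' o < 1 := by
        have hsum := hunc n' hn'N
        have hle : w n' o ≤ ∑ v ∈ A n', w n' v :=
          Finset.single_le_sum (fun v _ => hnn n' hn'N.le v) hoA'
        linarith
      have hbound := hinv n' hn'N.le
      rw [hcarde] at hbound
      have hmLc : (m:ℝ) * L ≤ (m:ℝ) * L * cmax :=
        le_mul_of_one_le_right (by nlinarith) hcmax1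
      have h2m : (1 + 1/c o)^(T.card - 1) ≤ 2 * ((m:ℝ)*L*cmax) := by
        have hstep : 1 + (m:ℝ) * L * w n' o ≤ 1 + (m:ℝ) * L := by nlinarith
        linarith
      -- Bernoulli: 2 ≤ (1 + 1/c)^c (rpow)
      have hB : (2:ℝ) ≤ (1 + 1/c o) ^ (c o) := by
        have hber := one_add_mul_self_le_rpow_one_add
          (s := 1/c o) (by linarith) (p := c o) (hc o)
        have h2 : 1 + c o * (1/c o) = 2 := by
          rw [mul_one_div, div_self hco.ne']; norm_num
        rw [h2] at hber
        exact hber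
      have hkk : (0:ℝ) ≤ ((T.card - 1 : ℕ):ℝ) / c o :=
        div_nonneg (Nat.cast_nonneg _) hco.le
      have hrpow : (2:ℝ) ^ (((T.card - 1 : ℕ):ℝ) / c o) ≤ 2 * ((m:ℝ)*L*cmax) := by
        have hle1 : (2:ℝ) ^ (((T.card - 1:ℕ):ℝ) / c o)
            ≤ ((1 + 1/c o) ^ (c o)) ^ (((T.card - 1:ℕ):ℝ) / c o) :=
          Real.rpow_le_rpow (by norm_num) hB hkk
        have heq2 : ((1 + 1/c o) ^ (c o)) ^ (((T.card - 1:ℕ):ℝ) / c o)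
            = (1 + 1/c o) ^ (T.card - 1) := by
          rw [← Real.rpow_mul hbase]
          have : c o * (((T.card - 1:ℕ):ℝ) / c o) = ((T.card - 1:ℕ):ℝ) := by
            rw [mul_comm, div_mul_cancel₀ _ hco.ne']
          rw [this, Real.rpow_natCast]
        rw [heq2] at hle1
        linarith
      have hXpos : (0:ℝ) < 2 * ((m:ℝ)*L*cmax) := by linarith
      have hle2 : ((T.card - 1:ℕ):ℝ) / c o ≤ Real.logb 2 (2 * ((m:ℝ)*L*cmax)) := by
        have hrl : (2:ℝ) ^ (Real.logb 2 (2 * ((m:ℝ)*L*cmax))) = 2 * ((m:ℝ)*L*cmax) :=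
          Real.rpow_logb (by norm_num) (by norm_num) hXpos
        rw [← hrl] at hrpow
        exact (Real.rpow_le_rpow_left_iff one_lt_two).mp hrpow
      have hlogb2 : Real.logb 2 (2 * ((m:ℝ)*L*cmax)) = 1 + lg := by
        rw [Real.logb_mul two_ne_zero (by linarith : (m:ℝ)*L*cmax ≠ 0),
          Real.logb_self_eq_one one_lt_two]
      rw [hlogb2] at hle2
      have hkcast : ((T.card - 1:ℕ):ℝ) = (T.card:ℝ) - 1 := by
        have h1 : 1 ≤ T.card := Finset.card_pos.mpr hTne
        push_cast [h1]
        ring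
      rw [hkcast] at hle2
      have hfin : (T.card:ℝ) - 1 ≤ (1 + lg) * c o := (div_le_iff₀ hco).mp hle2
      have hlgc : 0 ≤ lg * c o := mul_nonneg hlg hco.le
      nlinarith [hc o, hfin, hlgc]
  -- sum the fiber bounds
  have hcnt : N = ∑ o ∈ O, ((Finset.range N).filter (fun n => g n = o)).card := by
    have := Finset.card_eq_sum_card_fiberwise
      (f := g) (s := Finset.range N) (t := O)
      (fun n hn => (hgspec n (Finset.mem_range.mp hn)).1)
    simpa using this
  have hNle : (N:ℝ) ≤ (∑ v ∈ O, c v) * lg + 2 * ∑ v ∈ O, c v := by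
    have h1 : (N:ℝ) = ∑ o ∈ O, (((Finset.range N).filter (fun n => g n = o)).card : ℝ) := by
      exact_mod_cast congrArg (Nat.cast : ℕ → ℝ) hcnt
    rw [h1]
    calc ∑ o ∈ O, (((Finset.range N).filter (fun n => g n = o)).card : ℝ)
        ≤ ∑ o ∈ O, (c o * lg + 2 * c o) := Finset.sum_le_sum hfiber
      _ = (∑ v ∈ O, c v) * lg + 2 * ∑ v ∈ O, c v := by
          rw [Finset.sum_add_distrib, ← Finset.sum_mul, ← Finset.mul_sum]
  have hfinal := hcost N le_rfl
  nlinarith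
end
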